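/- arXiv:1904.04251 — 5 statements merged into one kernel-verified Lean document; each statement's English description precedes it below -/
import Mathlib

section
/- Let C ∈ ℝ^{m×n} be a nonzero matrix, and let x ∈ ℝⁿ, y ∈ ℝᵐ be vectors such that w := yᵀCx ≠ 0. Then the matrix C₂ := C − w⁻¹·(Cx)(yᵀC) has rank exactly one less than the rank of C. -/
/-!
Put `w = yᵀCx` and `D = C - w⁻¹ (Cx)(yᵀC)`. Every `Dz = Cz - w⁻¹ (yᵀCz) Cx` lies in the
range of `C` and is annihilated by `yᵀ`, while `Cz = Dz + w⁻¹ (yᵀCz) Cx`. Hence the range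
of `C` is the range of `D` plus the line through `Cx`, and `Cx` is not in the range of `D`
because `yᵀCx = w ≠ 0`; so the range drops by exactly one dimension.
-/

open Matrix

namespace Matrix

variable {K m n : Type*} [Field K] [Fintype m] [Fintype n]

noncomputable def wedderburnReduction (C : Matrix m n K) (x : n → K) (y : m → K) :
    Matrix m n K :=
  C - (y ⬝ᵥ C *ᵥ x)⁻¹ • vecMulVec (C *ᵥ x) (y ᵥ* C)

variable (C : Matrix m n K) (x : n → K) (y : m → K)

theorem wedderburnReduction_mulVec (z : n → K) :
    wedderburnReduction C x y *ᵥ z =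
      C *ᵥ z - ((y ⬝ᵥ C *ᵥ x)⁻¹ * (y ⬝ᵥ C *ᵥ z)) • C *ᵥ x := by
  rw [wedderburnReduction, sub_mulVec, smul_mulVec, vecMulVec_mulVec, op_smul_eq_smul,
    smul_smul, ← dotProduct_mulVec]

theorem dotProduct_wedderburnReduction_mulVec (hw : y ⬝ᵥ C *ᵥ x ≠ 0) (z : n → K) :
    y ⬝ᵥ wedderburnReduction C x y *ᵥ z = 0 := by
  rw [wedderburnReduction_mulVec, dotProduct_sub, dotProduct_smul, smul_eq_mul,
    mul_right_comm, inv_mul_cancel₀ hw, one_mul, sub_self]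

theorem range_mulVecLin_eq_range_wedderburnReduction_sup :
    LinearMap.range C.mulVecLin =
      LinearMap.range (wedderburnReduction C x y).mulVecLin ⊔ Submodule.span K {C *ᵥ x} := by
  apply le_antisymm
  · rintro _ ⟨z, rfl⟩
    have hsplit : C *ᵥ z = wedderburnReduction C x y *ᵥ z
        + ((y ⬝ᵥ C *ᵥ x)⁻¹ * (y ⬝ᵥ C *ᵥ z)) • C *ᵥ x := by
      rw [wedderburnReduction_mulVec, sub_add_cancel]
    rw [mulVecLin_apply, hsplit]
    exact Submodule.add_mem_sup ⟨z, rfl⟩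
      (Submodule.smul_mem _ _ (Submodule.mem_span_singleton_self _))
  · refine sup_le ?_ ((Submodule.span_singleton_le_iff_mem _ _).mpr ⟨x, rfl⟩)
    rintro _ ⟨z, rfl⟩
    rw [mulVecLin_apply, wedderburnReduction_mulVec]
    exact Submodule.sub_mem _ ⟨z, rfl⟩ (Submodule.smul_mem _ _ ⟨x, rfl⟩)

theorem mulVec_notMem_range_wedderburnReduction (hw : y ⬝ᵥ C *ᵥ x ≠ 0) :
    C *ᵥ x ∉ LinearMap.range (wedderburnReduction C x y).mulVecLin := by
  rintro ⟨z, hz⟩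
  rw [mulVecLin_apply] at hz
  exact hw (hz ▸ dotProduct_wedderburnReduction_mulVec C x y hw z)

theorem rank_wedderburnReduction_add_one (hw : y ⬝ᵥ C *ᵥ x ≠ 0) :
    (wedderburnReduction C x y).rank + 1 = C.rank := by
  rw [rank, rank, range_mulVecLin_eq_range_wedderburnReduction_sup C x y,
    Submodule.finrank_sup_span_singleton (mulVec_notMem_range_wedderburnReduction C x y hw)]

end Matrix

theorem stmt1_general {m n : ℕ} (C : Matrix (Fin m) (Fin n) ℝ)
    (x : Fin n → ℝ) (y : Fin m → ℝ) (hw : y ⬝ᵥ C.mulVec x ≠ 0) :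
    (C - (y ⬝ᵥ C.mulVec x)⁻¹ • Matrix.vecMulVec (C.mulVec x) (C.vecMul y)).rank + 1
      = C.rank :=
  rank_wedderburnReduction_add_one C x y hw

theorem stmt1 {m n : ℕ} (C : Matrix (Fin m) (Fin n) ℝ) (hC : C ≠ 0)
    (x : Fin n → ℝ) (y : Fin m → ℝ) (hw : y ⬝ᵥ C.mulVec x ≠ 0) :
    (C - (y ⬝ᵥ C.mulVec x)⁻¹ • Matrix.vecMulVec (C.mulVec x) (C.vecMul y)).rank + 1
      = C.rank :=
  stmt1_general C x y hw
end

section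
/- Let C ∈ ℝ^{m×n} with rank(C) ≥ 2, and let x₁ ∈ ℝⁿ, y₁ ∈ ℝᵐ satisfy y₁ᵀCx₁ ≠ 0. Define C₂ = C − (y₁ᵀCx₁)⁻¹·(Cx₁)(y₁ᵀC). Then a vector z ∈ ℝⁿ lies in the column space of C₂ᵀ (i.e., the row space of C₂) if and only if z lies in the column space of Cᵀ and z is orthogonal to x₁. -/
/-!
Every row combination `vᵀC₂` equals `(v - c y)ᵀC` for a scalar `c`, so the row space of `C₂`
lies in that of `C`; and `C₂ x = 0`, so it is orthogonal to `x`. Conversely, if `z = vᵀC` and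
`z ⬝ x = 0`, the correction term `(vᵀCx)(yᵀC)` vanishes and `vᵀC₂ = z`.
-/

open Matrix

namespace Matrix

variable {K m n : Type*} [Field K] [Fintype m] [Fintype n]

def wedderburnStep (C : Matrix m n K) (x : n → K) (y : m → K) : Matrix m n K :=
  C - (y ⬝ᵥ C *ᵥ x)⁻¹ • vecMulVec (C *ᵥ x) (y ᵥ* C)

variable {C : Matrix m n K} {x : n → K} {y : m → K}

lemma vecMul_wedderburnStep (v : m → K) :
    v ᵥ* wedderburnStep C x y = (v - ((y ⬝ᵥ C *ᵥ x)⁻¹ * (v ⬝ᵥ C *ᵥ x)) • y) ᵥ* C := by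
  rw [wedderburnStep, vecMul_sub, vecMul_smul, vecMul_vecMulVec, smul_smul, sub_vecMul,
    smul_vecMul]

lemma wedderburnStep_mulVec_self (h : y ⬝ᵥ C *ᵥ x ≠ 0) : wedderburnStep C x y *ᵥ x = 0 := by
  rw [wedderburnStep, sub_mulVec, smul_mulVec, vecMulVec_mulVec, op_smul_eq_smul,
    ← dotProduct_mulVec, smul_smul, inv_mul_cancel₀ h, one_smul, sub_self]

lemma vecMul_wedderburnStep_of_dotProduct_eq_zero (v : m → K) (hv : (v ᵥ* C) ⬝ᵥ x = 0) :
    v ᵥ* wedderburnStep C x y = v ᵥ* C := by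
  rw [vecMul_wedderburnStep, dotProduct_mulVec v, hv, mul_zero, zero_smul, sub_zero]

theorem exists_vecMul_wedderburnStep_eq_iff (h : y ⬝ᵥ C *ᵥ x ≠ 0) (z : n → K) :
    (∃ v, v ᵥ* wedderburnStep C x y = z) ↔ (∃ v, v ᵥ* C = z) ∧ z ⬝ᵥ x = 0 := by
  constructor
  · rintro ⟨v, rfl⟩
    refine ⟨⟨_, (vecMul_wedderburnStep v).symm⟩, ?_⟩
    rw [← dotProduct_mulVec, wedderburnStep_mulVec_self h, dotProduct_zero]
  · rintro ⟨⟨v, rfl⟩, hz⟩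
    exact ⟨v, vecMul_wedderburnStep_of_dotProduct_eq_zero v hz⟩

end Matrix

theorem stmt3_general {m n : ℕ} (C : Matrix (Fin m) (Fin n) ℝ)
    (x₁ : Fin n → ℝ) (y₁ : Fin m → ℝ) (hw : y₁ ⬝ᵥ C.mulVec x₁ ≠ 0)
    (C₂ : Matrix (Fin m) (Fin n) ℝ)
    (hC₂ : C₂ = C - (y₁ ⬝ᵥ C.mulVec x₁)⁻¹ •
      Matrix.vecMulVec (C.mulVec x₁) (C.vecMul y₁))
    (z : Fin n → ℝ) :
    (∃ y : Fin m → ℝ, C₂.vecMul y = z) ↔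
      (∃ y : Fin m → ℝ, C.vecMul y = z) ∧ z ⬝ᵥ x₁ = 0 := by
  subst hC₂
  exact exists_vecMul_wedderburnStep_eq_iff hw z

theorem stmt3 {m n : ℕ} (C : Matrix (Fin m) (Fin n) ℝ) (hC : 2 ≤ C.rank)
    (x₁ : Fin n → ℝ) (y₁ : Fin m → ℝ) (hw : y₁ ⬝ᵥ C.mulVec x₁ ≠ 0)
    (C₂ : Matrix (Fin m) (Fin n) ℝ)
    (hC₂ : C₂ = C - (y₁ ⬝ᵥ C.mulVec x₁)⁻¹ •
      Matrix.vecMulVec (C.mulVec x₁) (C.vecMul y₁))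
    (z : Fin n → ℝ) :
    (∃ y : Fin m → ℝ, C₂.vecMul y = z) ↔
      (∃ y : Fin m → ℝ, C.vecMul y = z) ∧ z ⬝ᵥ x₁ = 0 :=
  stmt3_general C x₁ y₁ hw C₂ hC₂ z
end

section
/- Let C = 𝟙ₘuᵀ + v𝟙ₙᵀ + Σᵢ rᵢcᵢᵀ ∈ ℝ^{m×n} where the summand M = 𝟙ₘuᵀ + v𝟙ₙᵀ has rank 2. Then 𝟙ₘ lies in the column space of C and 𝟙ₙ lies in the column space of Cᵀ. Moreover, for every x with Cx = 𝟙ₘ one has 𝟙ₙᵀx = 0, and for every y with Cᵀy = 𝟙ₙ one has 𝟙ₘᵀy = 0. (Here it is assumed, as in the rank factorization, that the vectors 𝟙ₘ, v, and the rᵢ are linearly independent, and 𝟙ₙ, u, and the cᵢ are linearly independent.) -/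
/-!
Write `C = ∑ᵢ aᵢ bᵢᵀ` with `a = (𝟙ₘ, v, r₁, …)` and `b = (u, 𝟙ₙ, c₁, …)`, both linearly
independent. Then `C x = ∑ᵢ (bᵢ ⬝ᵥ x) aᵢ`, so `C x = a₀ = 𝟙ₘ` is solvable because the `bᵢ` are
independent (the matrix with rows `bᵢ` is surjective), and any solution has `bᵢ ⬝ᵥ x = δᵢ₀`
because the `aᵢ` are independent; for `i = 1` this is `𝟙ₙ ⬝ᵥ x = 0`. Transposing swaps the roles
of `a` and `b`.
-/

open Matrix

namespace Matrix

variable {K ι m n : Type*} [Field K] [Fintype ι]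

theorem transpose_sum_vecMulVec (a : ι → m → K) (b : ι → n → K) :
    (∑ i, vecMulVec (a i) (b i))ᵀ = ∑ i, vecMulVec (b i) (a i) := by
  simp only [transpose_sum, transpose_vecMulVec]

variable [Fintype n]

theorem sum_vecMulVec_mulVec (a : ι → m → K) (b : ι → n → K) (x : n → K) :
    (∑ i, vecMulVec (a i) (b i)) *ᵥ x = ∑ i, (b i ⬝ᵥ x) • a i := by
  simp only [sum_mulVec, vecMulVec_mulVec, op_smul_eq_smul]

variable {a : ι → m → K} {b : ι → n → K}

theorem mulVec_surjective_of_linearIndependent_row [Fintype m] {M : Matrix m n K}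
    (h : LinearIndependent K M.row) : Function.Surjective M.mulVec :=
  LinearMap.range_eq_top.mp <| Submodule.eq_top_of_finrank_eq <|
    h.rank_matrix.trans (Module.finrank_fintype_fun_eq_card K).symm

theorem exists_sum_vecMulVec_mulVec_eq (hb : LinearIndependent K b) (i₀ : ι) :
    ∃ x, (∑ i, vecMulVec (a i) (b i)) *ᵥ x = a i₀ := by
  classical
  obtain ⟨x, hx⟩ := mulVec_surjective_of_linearIndependent_row (M := of b) hb (Pi.single i₀ 1)
  have hbx : ∀ i, b i ⬝ᵥ x = (Pi.single i₀ 1 : ι → K) i := fun i => congrFun hx i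
  exact ⟨x, by simp [sum_vecMulVec_mulVec, hbx, Pi.single_apply]⟩

theorem dotProduct_eq_single_of_sum_vecMulVec_mulVec_eq [DecidableEq ι]
    (ha : LinearIndependent K a) {i₀ : ι} {x : n → K}
    (hx : (∑ i, vecMulVec (a i) (b i)) *ᵥ x = a i₀) (j : ι) :
    b j ⬝ᵥ x = (Pi.single i₀ 1 : ι → K) j := by
  refine Fintype.linearIndependent_iffₛ.mp ha (fun i => b i ⬝ᵥ x) (Pi.single i₀ 1) ?_ j
  rw [← sum_vecMulVec_mulVec, hx]
  simp [Pi.single_apply]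

end Matrix

theorem Fin.cons_cons_comp_swap {α : Type*} {k : ℕ} (x y : α) (f : Fin k → α) :
    (Fin.cons y (Fin.cons x f) : Fin (k + 2) → α) ∘ Equiv.swap 0 1 = Fin.cons x (Fin.cons y f) := by
  funext i
  refine Fin.cases ?_ (fun j => Fin.cases ?_ (fun l => ?_) j) i
  · simp
  · simp
  · simp [Equiv.swap_apply_of_ne_of_ne, Fin.ext_iff]

theorem stmt6_general {m n k : ℕ}
    (u : Fin n → ℝ) (v : Fin m → ℝ)
    (r : Fin k → Fin m → ℝ) (c : Fin k → Fin n → ℝ)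
    (C : Matrix (Fin m) (Fin n) ℝ)
    (hC : C = Matrix.vecMulVec (1 : Fin m → ℝ) u + Matrix.vecMulVec v (1 : Fin n → ℝ)
      + ∑ i : Fin k, Matrix.vecMulVec (r i) (c i))
    (hcols : LinearIndependent ℝ (Fin.cons (1 : Fin m → ℝ) (Fin.cons v r)))
    (hrows : LinearIndependent ℝ (Fin.cons (1 : Fin n → ℝ) (Fin.cons u c))) :
    (∃ x : Fin n → ℝ, C.mulVec x = 1) ∧
    (∃ y : Fin m → ℝ, C.vecMul y = 1) ∧
    (∀ x : Fin n → ℝ, C.mulVec x = 1 → (1 : Fin n → ℝ) ⬝ᵥ x = 0) ∧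
    (∀ y : Fin m → ℝ, C.vecMul y = 1 → (1 : Fin m → ℝ) ⬝ᵥ y = 0) := by
  set a : Fin (k + 2) → Fin m → ℝ := Fin.cons 1 (Fin.cons v r)
  set b : Fin (k + 2) → Fin n → ℝ := Fin.cons u (Fin.cons 1 c)
  have hb : LinearIndependent ℝ b := by
    simpa only [b, Fin.cons_cons_comp_swap] using hrows.comp _ (Equiv.swap 0 1).injective
  have hCab : C = ∑ i, vecMulVec (a i) (b i) := by
    simp [hC, a, b, Fin.sum_univ_succ, add_assoc]
  have hCT : Cᵀ = ∑ i, vecMulVec (b i) (a i) := by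
    rw [hCab, transpose_sum_vecMulVec]
  simp only [← mulVec_transpose]
  rw [hCT, hCab]
  refine ⟨exists_sum_vecMulVec_mulVec_eq hb 0, exists_sum_vecMulVec_mulVec_eq hcols 1,
    fun x hx => ?_, fun y hy => ?_⟩
  · simpa [a, b] using dotProduct_eq_single_of_sum_vecMulVec_mulVec_eq hcols (i₀ := 0) hx 1
  · simpa [a, b] using dotProduct_eq_single_of_sum_vecMulVec_mulVec_eq hb (i₀ := 1) hy 0

theorem stmt6 {m n k : ℕ}
    (u : Fin n → ℝ) (v : Fin m → ℝ)
    (r : Fin k → Fin m → ℝ) (c : Fin k → Fin n → ℝ)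
    (C : Matrix (Fin m) (Fin n) ℝ)
    (hC : C = Matrix.vecMulVec (1 : Fin m → ℝ) u + Matrix.vecMulVec v (1 : Fin n → ℝ)
      + ∑ i : Fin k, Matrix.vecMulVec (r i) (c i))
    (hMrank : (Matrix.vecMulVec (1 : Fin m → ℝ) u
      + Matrix.vecMulVec v (1 : Fin n → ℝ)).rank = 2)
    (hcols : LinearIndependent ℝ (Fin.cons (1 : Fin m → ℝ) (Fin.cons v r)))
    (hrows : LinearIndependent ℝ (Fin.cons (1 : Fin n → ℝ) (Fin.cons u c))) :
    (∃ x : Fin n → ℝ, C.mulVec x = 1) ∧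
    (∃ y : Fin m → ℝ, C.vecMul y = 1) ∧
    (∀ x : Fin n → ℝ, C.mulVec x = 1 → (1 : Fin n → ℝ) ⬝ᵥ x = 0) ∧
    (∀ y : Fin m → ℝ, C.vecMul y = 1 → (1 : Fin m → ℝ) ⬝ᵥ y = 0) :=
  stmt6_general u v r c C hC hcols hrows
end

section
/- Let A, B ∈ ℝ^{m×n} be nonzero matrices with rank(A + B) > 1, and fix (i, j) with a_{ij} ≠ 0. Define r_j(λ) = A^{(j)} + λB^{(j)} and c_i(λ)ᵀ = (a_{ij} + λb_{ij})⁻¹(A_{(i)} + λB_{(i)}) whenever a_{ij} + λb_{ij} ≠ 0. Then there exists λ* ∈ ℂ such that rank(A + λ*B) = 1 if and only if either (1) b_{ij} ≠ 0 and rank(A − (a_{ij}/b_{ij})B) = 1, or (2) there exists λ* with a_{ij} + λ*b_{ij} ≠ 0 and A + λ*B = r_j(λ*)c_i(λ*)ᵀ. -/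
/-!
A matrix over a field has rank one iff it is nonzero and all its `2 × 2` minors vanish; this
criterion is invariant under field embeddings such as `ℝ → ℂ`. If the pencil `A + λB` has rank one
and its `(i, j)` entry is nonzero, it is the outer product of its `j`-th column with its `i`-th
row divided by that entry. If instead the entry vanishes, then `b_ij ≠ 0` (as `a_ij ≠ 0`) and
`λ = -a_ij / b_ij` is real, so the rank-one condition descends to the real matrix.
-/

open Matrix

namespace Matrix

variable {K L m n : Type*} [Field K] [Fintype n]

theorem rank_eq_zero_iff {M : Matrix m n K} : M.rank = 0 ↔ M = 0 := by
  rw [rank, Submodule.finrank_eq_zero, range_mulVecLin, Submodule.span_eq_bot,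
    Set.forall_mem_range, ← Matrix.ext_iff]
  simp only [funext_iff, col_apply, Pi.zero_apply, zero_apply]
  exact forall_comm

theorem mul_eq_mul_of_rank_le_one {M : Matrix m n K} (hM : M.rank ≤ 1) (s s' : m) (t t' : n) :
    M s t * M s' t' = M s t' * M s' t := by
  rw [rank, Submodule.finrank_le_one_iff_isPrincipal, range_mulVecLin] at hM
  obtain ⟨w, hw⟩ := hM
  have hcol : ∀ t, ∃ c : K, ∀ s, M s t = c * w s := fun t => by
    have := Submodule.subset_span (R := K) (Set.mem_range_self (f := M.col) t)
    obtain ⟨c, hc⟩ := Submodule.mem_span_singleton.1 (hw ▸ this)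
    exact ⟨c, fun s => (congrFun hc s).symm⟩
  obtain ⟨c, hc⟩ := hcol t
  obtain ⟨c', hc'⟩ := hcol t'
  rw [hc, hc, hc', hc']
  ring

omit [Fintype n] in
theorem eq_vecMulVec_of_mul_eq_mul {M : Matrix m n K}
    (hM : ∀ s s' t t', M s t * M s' t' = M s t' * M s' t) {a : m} {b : n} (hab : M a b ≠ 0) :
    M = vecMulVec (fun s => M s b) (fun t => (M a b)⁻¹ * M a t) := by
  ext s t
  rw [vecMulVec_apply]
  field_simp
  exact hM s a t b

theorem rank_eq_one_iff {M : Matrix m n K} :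
    M.rank = 1 ↔ M ≠ 0 ∧ ∀ s s' t t', M s t * M s' t' = M s t' * M s' t := by
  refine ⟨fun h => ⟨?_, mul_eq_mul_of_rank_le_one h.le⟩, fun ⟨h0, hM⟩ => ?_⟩
  · rintro rfl
    simp [rank_zero] at h
  · obtain ⟨a, b, hab⟩ : ∃ a b, M a b ≠ 0 := by
      by_contra! h
      exact h0 (ext h)
    refine le_antisymm ?_ (Nat.one_le_iff_ne_zero.2 (rank_eq_zero_iff.not.2 h0))
    rw [eq_vecMulVec_of_mul_eq_mul hM hab]
    exact rank_vecMulVec_le _ _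

theorem eq_vecMulVec_of_rank_eq_one {M : Matrix m n K} (hM : M.rank = 1) {a : m} {b : n}
    (hab : M a b ≠ 0) : M = vecMulVec (fun s => M s b) (fun t => (M a b)⁻¹ * M a t) :=
  eq_vecMulVec_of_mul_eq_mul (rank_eq_one_iff.1 hM).2 hab

theorem rank_map_eq_one_iff [Field L] (f : K →+* L) {M : Matrix m n K} :
    (M.map f).rank = 1 ↔ M.rank = 1 := by
  have hzero : M.map f = 0 ↔ M = 0 := by simp [← Matrix.ext_iff]
  simp only [rank_eq_one_iff, ne_eq, hzero, map_apply, ← map_mul, f.injective.eq_iff]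

end Matrix

theorem stmt9_general {m n : ℕ} (A B : Matrix (Fin m) (Fin n) ℝ)
    (i : Fin m) (j : Fin n) (hij : A i j ≠ 0) :
    (∃ l : ℂ, (A.map (Complex.ofReal) + l • B.map (Complex.ofReal)).rank = 1) ↔
      (B i j ≠ 0 ∧ (A + (-(A i j / B i j)) • B).rank = 1) ∨
      (∃ l : ℂ,
        (A i j : ℂ) + l * (B i j : ℂ) ≠ 0 ∧
        A.map (Complex.ofReal) + l • B.map (Complex.ofReal) =
          Matrix.vecMulVec (fun s => (A s j : ℂ) + l * (B s j : ℂ))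
            (fun t => ((A i j : ℂ) + l * (B i j : ℂ))⁻¹ * ((A i t : ℂ) + l * (B i t : ℂ)))) := by
  have hreal (c : ℝ) :
      (A + c • B).map Complex.ofRealHom = A.map Complex.ofReal + (c : ℂ) • B.map Complex.ofReal := by
    ext; simp
  constructor
  · rintro ⟨l, hl⟩
    by_cases hc : (A i j : ℂ) + l * B i j = 0
    · have hb : B i j ≠ 0 := fun h => hij (by simpa [h] using hc)
      have hl_real : l = ((-(A i j / B i j) : ℝ) : ℂ) := by
        have : (B i j : ℂ) ≠ 0 := by exact_mod_cast hb
        push_cast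
        field_simp
        linear_combination hc
      refine Or.inl ⟨hb, (rank_map_eq_one_iff Complex.ofRealHom).1 ?_⟩
      rwa [hreal, ← hl_real]
    · exact Or.inr ⟨l, hc, eq_vecMulVec_of_rank_eq_one hl hc⟩
  · rintro (⟨-, hr⟩ | ⟨l, hl, heq⟩)
    · exact ⟨_, hreal _ ▸ (rank_map_eq_one_iff Complex.ofRealHom).2 hr⟩
    · refine ⟨l, rank_eq_one_iff.2 ⟨fun h0 => hl ?_, fun s s' t t' => ?_⟩⟩
      · exact congrFun₂ h0 i j
      · rw [heq]
        simp only [vecMulVec_apply]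
        ring

theorem stmt9 {m n : ℕ} (A B : Matrix (Fin m) (Fin n) ℝ)
    (hA : A ≠ 0) (hB : B ≠ 0) (hAB : 1 < (A + B).rank)
    (i : Fin m) (j : Fin n) (hij : A i j ≠ 0) :
    (∃ l : ℂ, (A.map (Complex.ofReal) + l • B.map (Complex.ofReal)).rank = 1) ↔
      (B i j ≠ 0 ∧ (A + (-(A i j / B i j)) • B).rank = 1) ∨
      (∃ l : ℂ,
        (A i j : ℂ) + l * (B i j : ℂ) ≠ 0 ∧
        A.map (Complex.ofReal) + l • B.map (Complex.ofReal) =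
          Matrix.vecMulVec (fun s => (A s j : ℂ) + l * (B s j : ℂ))
            (fun t => ((A i j : ℂ) + l * (B i j : ℂ))⁻¹ * ((A i t : ℂ) + l * (B i t : ℂ)))) :=
  stmt9_general A B i j hij
end

section
/- Let Ã, B̃ ∈ ℝ^{m×n} and suppose there exists γ > 0 such that C̃ := Ã + γB̃ = 𝟙ₘûᵀ + r̂ĉᵀ where 𝟙ₘûᵀ has rank 1, rank(C̃) = 2, and C̃ is not of the form 𝟙ₘuᵀ + v𝟙ₙᵀ. Then the game (Ã, B̃) is strategically equivalent to the rank-1 game (Ã − 𝟙ₘûᵀ, γB̃). -/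
open Matrix

/-- `(p, q)` is a Nash equilibrium of the bimatrix game `(A, B)`. -/
def IsNashEq {m n : ℕ} (A B : Matrix (Fin m) (Fin n) ℝ)
    (p : Fin m → ℝ) (q : Fin n → ℝ) : Prop :=
  p ∈ stdSimplex ℝ (Fin m) ∧ q ∈ stdSimplex ℝ (Fin n) ∧
  (∀ p' ∈ stdSimplex ℝ (Fin m), p' ⬝ᵥ A.mulVec q ≤ p ⬝ᵥ A.mulVec q) ∧
  (∀ q' ∈ stdSimplex ℝ (Fin n), p ⬝ᵥ B.mulVec q' ≤ p ⬝ᵥ B.mulVec q)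

lemma my_rank_add_le {m n : ℕ} (A B : Matrix (Fin m) (Fin n) ℝ) :
    (A + B).rank ≤ A.rank + B.rank := by
  simp only [Matrix.rank]
  rw [Matrix.mulVecLin_add]
  have hle : LinearMap.range (A.mulVecLin + B.mulVecLin) ≤
      LinearMap.range A.mulVecLin ⊔ LinearMap.range B.mulVecLin := by
    rintro _ ⟨x, rfl⟩
    exact Submodule.add_mem_sup ⟨x, rfl⟩ ⟨x, rfl⟩
  exact le_trans (Submodule.finrank_mono hle)
    (Submodule.finrank_add_le_finrank_add_finrank _ _)

lemma my_rank_vecMulVec_le {m n : ℕ} (w : Fin m → ℝ) (v : Fin n → ℝ) :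
    (Matrix.vecMulVec w v).rank ≤ 1 := by
  rw [Matrix.vecMulVec_eq (Fin 1)]
  exact le_trans (Matrix.rank_mul_le_left _ _)
    (le_trans (Matrix.rank_le_card_width _) (by simp))

lemma dot_vecMulVec_one {m n : ℕ} (p : Fin m → ℝ) (hp : p ∈ stdSimplex ℝ (Fin m))
    (uh : Fin n → ℝ) (q : Fin n → ℝ) :
    p ⬝ᵥ (Matrix.vecMulVec (1 : Fin m → ℝ) uh).mulVec q = uh ⬝ᵥ q := by
  have h1 : (Matrix.vecMulVec (1 : Fin m → ℝ) uh).mulVec q =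
      fun _ => uh ⬝ᵥ q := by
    funext i
    simp [Matrix.mulVec, Matrix.vecMulVec, dotProduct]
  rw [h1]
  simp only [dotProduct]
  rw [← Finset.sum_mul]
  rw [hp.2]
  ring

theorem stmt13 {m n : ℕ} (Atil Btil : Matrix (Fin m) (Fin n) ℝ)
    (γ : ℝ) (hγ : 0 < γ)
    (uh : Fin n → ℝ) (rh : Fin m → ℝ) (ch : Fin n → ℝ)
    (hdecomp : Atil + γ • Btil =
      Matrix.vecMulVec (1 : Fin m → ℝ) uh + Matrix.vecMulVec rh ch)
    (hu : (Matrix.vecMulVec (1 : Fin m → ℝ) uh).rank = 1)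
    (hrank : (Atil + γ • Btil).rank = 2)
    (hnotM : ¬ ∃ (u : Fin n → ℝ) (v : Fin m → ℝ),
      Atil + γ • Btil =
        Matrix.vecMulVec (1 : Fin m → ℝ) u + Matrix.vecMulVec v (1 : Fin n → ℝ)) :
    ((Atil - Matrix.vecMulVec (1 : Fin m → ℝ) uh) + γ • Btil).rank = 1 ∧
    (∀ (p : Fin m → ℝ) (q : Fin n → ℝ),
      IsNashEq Atil Btil p q ↔
        IsNashEq (Atil - Matrix.vecMulVec (1 : Fin m → ℝ) uh) (γ • Btil) p q) := by
  set E := Matrix.vecMulVec (1 : Fin m → ℝ) uh with hE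
  have hD : (Atil - E) + γ • Btil = Matrix.vecMulVec rh ch := by
    have : (Atil - E) + γ • Btil = (Atil + γ • Btil) - E := by abel
    rw [this, hdecomp]; abel
  constructor
  · rw [hD]
    refine le_antisymm (my_rank_vecMulVec_le _ _) ?_
    by_contra h
    push_neg at h
    interval_cases hr : (Matrix.vecMulVec rh ch).rank
    have := my_rank_add_le E (Matrix.vecMulVec rh ch)
    rw [← hdecomp, hrank, hu, hr] at this
    omega
  · intro p q
    unfold IsNashEq
    constructor
    · rintro ⟨hp, hq, hA, hB⟩
      refine ⟨hp, hq, ?_, ?_⟩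
      · intro p' hp'
        rw [Matrix.sub_mulVec, dotProduct_sub, dotProduct_sub,
          dot_vecMulVec_one p hp, dot_vecMulVec_one p' hp']
        exact sub_le_sub_right (hA p' hp') _
      · intro q' hq'
        rw [Matrix.smul_mulVec, Matrix.smul_mulVec,
          dotProduct_smul, dotProduct_smul]
        exact smul_le_smul_of_nonneg_left (hB q' hq') hγ.le
    · rintro ⟨hp, hq, hA, hB⟩
      refine ⟨hp, hq, ?_, ?_⟩
      · intro p' hp'
        have := hA p' hp'
        rw [Matrix.sub_mulVec, dotProduct_sub, dotProduct_sub,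
          dot_vecMulVec_one p hp, dot_vecMulVec_one p' hp'] at this
        linarith
      · intro q' hq'
        have := hB q' hq'
        rw [Matrix.smul_mulVec, Matrix.smul_mulVec,
          dotProduct_smul, dotProduct_smul] at this
        have := le_of_smul_le_smul_left this hγ
        exact this
end
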